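/- For every positive integer n and every complex number z with |z| < 1, we have ∑_{a≥0} H_n^⋆({2}^a) z^{2a} = ∏_{k=1}^{n} (1 - z²/k²)^{-1}. -/

import Mathlib

noncomputable def Hstar : ℕ → List ℕ → ℝ
  | _, [] => 1
  | n, s :: rest => ∑ k ∈ Finset.Icc 1 n, (1 / (k : ℝ) ^ s) * Hstar k rest

noncomputable def zetaStar : List ℕ → ℝ
  | [] => 1
  | s :: rest => ∑' k : ℕ+, (1 / (k : ℝ) ^ s) * Hstar k rest

def Δ (a b : ℕ) : ℕ := if a = b then 0 else 1

noncomputable def Ssharp (k l : ℕ) : ℕ → ℝ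
  | 0 => 2 ^ Δ k l
  | c + 1 => ∑ j ∈ Finset.Icc l k, (2 ^ Δ k j / (j : ℝ)) * Ssharp j l c

/-! Splitting off the indices equal to `n` gives
`H_n^⋆({s}^a) = ∑_{b + c = a} n^{-s b} H_{n-1}^⋆({s}^c)`, so the generating series
`∑_a H_n^⋆({s}^a) x^a` is the Cauchy product of the geometric series `∑_b (x / n^s)^b` with the
series for `n - 1`. For `‖x‖ < 1` all these series converge absolutely, and induction on `n`
gives `∏_{k=1}^n (1 - x / k^s)⁻¹`. -/

open Finset

lemma Hstar_succ_cons (n s : ℕ) (l : List ℕ) :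
    Hstar (n + 1) (s :: l) = Hstar n (s :: l) + 1 / ((n + 1 : ℕ) : ℝ) ^ s * Hstar (n + 1) l := by
  simp only [Hstar]
  exact sum_Icc_succ_top (by omega) _

lemma Hstar_succ_replicate (n s a : ℕ) :
    Hstar (n + 1) (List.replicate a s) =
      ∑ p ∈ antidiagonal a, (1 / ((n + 1 : ℕ) : ℝ) ^ s) ^ p.1 * Hstar n (List.replicate p.2 s) := by
  induction a with
  | zero => simp [Hstar]
  | succ a ih =>
    rw [Nat.sum_antidiagonal_succ, List.replicate_succ, Hstar_succ_cons, ih, mul_sum]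
    simp only [pow_zero, one_mul, pow_succ', mul_assoc]

lemma Hstar_succ_replicate_mul_pow {𝕜 : Type*} [RCLike 𝕜] (n s a : ℕ) (x : 𝕜) :
    (Hstar (n + 1) (List.replicate a s) : 𝕜) * x ^ a =
      ∑ p ∈ antidiagonal a,
        (x / ((n + 1 : ℕ) : 𝕜) ^ s) ^ p.1 * ((Hstar n (List.replicate p.2 s) : 𝕜) * x ^ p.2) := by
  rw [Hstar_succ_replicate, RCLike.ofReal_sum, sum_mul]
  refine sum_congr rfl fun p hp => ?_
  rw [← mem_antidiagonal.1 hp, pow_add, div_pow]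
  push_cast
  ring

lemma norm_div_natCast_pow_le {𝕜 : Type*} [RCLike 𝕜] (x : 𝕜) {k : ℕ} (hk : 1 ≤ k) (s : ℕ) :
    ‖x / (k : 𝕜) ^ s‖ ≤ ‖x‖ := by
  rw [norm_div, norm_pow, RCLike.norm_natCast]
  exact div_le_self (norm_nonneg x) (one_le_pow₀ (by exact_mod_cast hk))

theorem summable_norm_Hstar_replicate_mul_pow_and_tsum_eq {𝕜 : Type*} [RCLike 𝕜]
    (s : ℕ) {x : 𝕜} (hx : ‖x‖ < 1) (n : ℕ) :
    Summable (fun a => ‖(Hstar n (List.replicate a s) : 𝕜) * x ^ a‖) ∧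
      ∑' a, (Hstar n (List.replicate a s) : 𝕜) * x ^ a
        = ∏ k ∈ Icc 1 n, (1 - x / (k : 𝕜) ^ s)⁻¹ := by
  induction n with
  | zero =>
    have h0 : ∀ a, (Hstar 0 (List.replicate a s) : 𝕜) * x ^ a = if a = 0 then 1 else 0 := by
      intro a
      rcases a with _ | a <;> simp [Hstar, List.replicate_succ]
    refine ⟨summable_of_ne_finset_zero (s := {0}) fun a ha => ?_, ?_⟩
    · simp_all
    · simp [h0]
  | succ n ih =>
    obtain ⟨hsum, htsum⟩ := ih
    set q : 𝕜 := x / ((n + 1 : ℕ) : 𝕜) ^ s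
    have hq : ‖q‖ < 1 := (norm_div_natCast_pow_le x (by omega) s).trans_lt hx
    have hgeom : Summable (fun b => ‖q ^ b‖) := by
      simpa only [norm_pow] using summable_geometric_of_lt_one (norm_nonneg q) hq
    have hcauchy := fun a => Hstar_succ_replicate_mul_pow n s a x
    refine ⟨(summable_norm_sum_mul_antidiagonal_of_summable_norm hgeom hsum).congr
      fun a => by rw [hcauchy], ?_⟩
    calc ∑' a, (Hstar (n + 1) (List.replicate a s) : 𝕜) * x ^ a
        = ∑' a, ∑ p ∈ antidiagonal a, q ^ p.1 * ((Hstar n (List.replicate p.2 s) : 𝕜) * x ^ p.2) :=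
          tsum_congr hcauchy
      _ = (∑' b, q ^ b) * ∑' a, (Hstar n (List.replicate a s) : 𝕜) * x ^ a :=
          (tsum_mul_tsum_eq_tsum_sum_antidiagonal_of_summable_norm hgeom hsum).symm
      _ = ∏ k ∈ Icc 1 (n + 1), (1 - x / (k : 𝕜) ^ s)⁻¹ := by
          rw [tsum_geometric_of_norm_lt_one hq, htsum, prod_Icc_succ_top (by omega), mul_comm]

theorem stmt8_general (n : ℕ) (z : ℂ) (hz : ‖z‖ < 1) :
    ∑' a : ℕ, (Hstar n (List.replicate a 2) : ℂ) * z ^ (2 * a)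
      = ∏ k ∈ Finset.Icc 1 n, (1 - z ^ 2 / (k : ℂ) ^ 2)⁻¹ := by
  have hz2 : ‖z ^ 2‖ < 1 := by
    rw [norm_pow]
    exact pow_lt_one₀ (norm_nonneg z) hz two_ne_zero
  simp_rw [pow_mul]
  exact (summable_norm_Hstar_replicate_mul_pow_and_tsum_eq 2 hz2 n).2

theorem stmt8 (n : ℕ) (hn : 0 < n) (z : ℂ) (hz : ‖z‖ < 1) :
    ∑' a : ℕ, (Hstar n (List.replicate a 2) : ℂ) * z ^ (2 * a)
      = ∏ k ∈ Finset.Icc 1 n, (1 - z ^ 2 / (k : ℂ) ^ 2)⁻¹ :=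
  stmt8_general n z hz
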